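/- If ξ < Ω and ξ ∈ JUMP(X), then Θ_X(ξ) is not a limit point of X. -/

import Mathlib

open Ordinal Set

noncomputable section
open scoped Classical

/-- `Ω`, the first uncountable ordinal. -/
def OmegaO : Ordinal := (Cardinal.aleph 1).ord

/-- `ε_{Ω+1}`, the least `ε > Ω` with `ω ^ ε = ε`. -/
def epsOmega : Ordinal := nfp (fun a => Ordinal.omega0 ^ a) (OmegaO + 1)

lemma omega0_le_OmegaO : Ordinal.omega0 ≤ OmegaO := by
  rw [OmegaO, ← Cardinal.ord_aleph0]
  exact Cardinal.ord_le_ord.2 (Cardinal.aleph0_le_aleph 1)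

lemma one_lt_OmegaO : 1 < OmegaO :=
  lt_of_lt_of_le Ordinal.one_lt_omega0 omega0_le_OmegaO

lemma OmegaO_pos : 0 < OmegaO := lt_trans zero_lt_one one_lt_OmegaO

/-- `ξ*`, the maximal coefficient in the `Ω`-normal form of `ξ`. -/
def star (ξ : Ordinal) : Ordinal :=
  if h0 : ξ = 0 then 0
  else if hl : log OmegaO ξ < ξ then
    max (max (star (log OmegaO ξ)) (star (ξ % OmegaO ^ log OmegaO ξ)))
      (ξ / OmegaO ^ log OmegaO ξ)
  else 0
termination_by ξ
decreasing_by
  · exact hl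
  · exact mod_opow_log_lt_self _ h0

/-- The generalized fundamental sequence `ξ[θ]`. -/
def fs (ξ θ : Ordinal) : Ordinal :=
  if h0 : ξ ≤ 1 then 0
  else if hmod : ξ % OmegaO ^ log OmegaO ξ ≠ 0 then
    OmegaO ^ log OmegaO ξ * (ξ / OmegaO ^ log OmegaO ξ) + fs (ξ % OmegaO ^ log OmegaO ξ) θ
  else if Order.IsSuccLimit (ξ / OmegaO ^ log OmegaO ξ) then OmegaO ^ log OmegaO ξ * θ
  else if hβ : ξ / OmegaO ^ log OmegaO ξ = 1 then
    (if hlog : Order.IsSuccLimit (log OmegaO ξ) then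
       (if hll : log OmegaO ξ < ξ then OmegaO ^ fs (log OmegaO ξ) θ else 0)
     else OmegaO ^ Ordinal.pred (log OmegaO ξ) * θ)
  else
    OmegaO ^ log OmegaO ξ * Ordinal.pred (ξ / OmegaO ^ log OmegaO ξ) + fs (OmegaO ^ log OmegaO ξ) θ
termination_by ξ
decreasing_by
  · exact mod_opow_log_lt_self _ (by intro h; exact h0 (by simp [h]))
  · exact hll
  · -- `Ω ^ log Ω ξ < ξ`
    have hξ0 : ξ ≠ 0 := by intro h; exact h0 (by simp [h])
    have hle : OmegaO ^ log OmegaO ξ ≤ ξ := opow_log_le_self _ hξ0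
    have hpos : 0 < OmegaO ^ log OmegaO ξ :=
      opow_pos _ OmegaO_pos
    have hβ0 : 0 < ξ / OmegaO ^ log OmegaO ξ :=
      Ordinal.div_pos (by positivity) |>.2 hle
    have hβ1 : 1 < ξ / OmegaO ^ log OmegaO ξ :=
      lt_of_le_of_ne (Order.one_le_iff_pos.2 hβ0) (Ne.symm hβ)
    calc OmegaO ^ log OmegaO ξ = OmegaO ^ log OmegaO ξ * 1 := (mul_one _).symm
      _ < OmegaO ^ log OmegaO ξ * (ξ / OmegaO ^ log OmegaO ξ) := by
          exact mul_lt_mul_of_pos_left hβ1 hpos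
      _ ≤ ξ := Ordinal.mul_div_le _ _

/-- The terminal part `τ(ξ)`. -/
def tau (ξ : Ordinal) : Ordinal :=
  if h0 : ξ = 0 then 0
  else if hmod : ξ % OmegaO ^ log OmegaO ξ ≠ 0 then tau (ξ % OmegaO ^ log OmegaO ξ)
  else if Order.IsSuccLimit (ξ / OmegaO ^ log OmegaO ξ) then ξ / OmegaO ^ log OmegaO ξ
  else if log OmegaO ξ = 0 then 1
  else if hlog : Order.IsSuccLimit (log OmegaO ξ) then
    (if hll : log OmegaO ξ < ξ then tau (log OmegaO ξ) else 0)
  else OmegaO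
termination_by ξ
decreasing_by
  · exact mod_opow_log_lt_self _ h0
  · exact hll

/-- The collapsing function `Θ_X`. -/
def ThetaF (X : Set Ordinal) (ξ : Ordinal) : Ordinal :=
  sInf {θ | θ ∈ X ∧ star ξ < θ ∧ ∀ ζ, ζ < ξ → star ζ < θ → ThetaF X ζ < θ}
termination_by ξ
decreasing_by exact by assumption

/-- `Ω_n`: the tower `Ω_0 = 1`, `Ω_{n+1} = Ω ^ Ω_n`. -/
def OmegaTow : ℕ → Ordinal
  | 0 => 1
  | n + 1 => OmegaO ^ OmegaTow n

/-- `Θ_X(ε_{Ω+1}) = sup_n Θ_X(Ω_n)`. -/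
def ThetaEps (X : Set Ordinal) : Ordinal := ⨆ n : ℕ, ThetaF X (OmegaTow n)

/-- `ε̂_{Ω+1}`. -/
def hatEps (X : Set Ordinal) : Set Ordinal :=
  {ξ | ξ < epsOmega ∧ star ξ < ThetaEps X}

/-- `X` is a club in `Ω`. -/
def IsClubBelowOmega (X : Set Ordinal) : Prop :=
  (∀ x ∈ X, x < OmegaO) ∧
  (∀ a, a < OmegaO → ∃ x ∈ X, a < x) ∧
  (∀ S : Set Ordinal, S ⊆ X → S.Nonempty → sSup S < OmegaO → sSup S ∈ X)

/-- The set of limit points of `X` (below `Ω`). -/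
def limitPtsOf (X : Set Ordinal) : Set Ordinal :=
  {x | 0 < x ∧ ∀ y, y < x → ∃ z ∈ X, y < z ∧ z < x}

/-- `FIX(X)`. -/
def FIXs (X : Set Ordinal) : Set Ordinal :=
  {ξ | ξ < epsOmega ∧ star (fs ξ 1) < star ξ ∧ star ξ = tau ξ ∧
    ∃ γ, ξ < γ ∧ γ < epsOmega ∧ star ξ = ThetaF X γ}

/-- `JUMP(X)`. -/
def JUMPs (X : Set Ordinal) : Set Ordinal :=
  {0} ∪ {ξ | ∃ ζ, ξ = ζ + 1} ∪ FIXs X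

/-- `Θ*`. -/
def ThetaStarF (X : Set Ordinal) (ξ : Ordinal) : Ordinal :=
  if ∃ ζ, ξ = ζ + 1 then ThetaF X (Ordinal.pred ξ)
  else if ξ ∈ FIXs X then tau ξ
  else 0

/-- `ξ̌`. -/
def checkF (X : Set Ordinal) (ξ : Ordinal) : Ordinal :=
  if 0 < ThetaStarF X ξ then OmegaO * (ξ / OmegaO) else ξ

/-- `ℙ`, the club of countable additively indecomposable ordinals. -/
def PP : Set Ordinal := {x | x < OmegaO ∧ ∃ a, x = Ordinal.omega0 ^ a}

/-- `1 + Ord`, the club of nonzero countable ordinals. -/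
def oneOrdS : Set Ordinal := {x | 0 < x ∧ x < OmegaO}

/-- `Θ^{(i)}(ξ)`. -/
def ThetaIter (X : Set Ordinal) (ξ : Ordinal) : ℕ → Ordinal
  | 0 => ThetaStarF X ξ
  | n + 1 => ThetaF X (fs (checkF X ξ) (ThetaIter X ξ n))

/-- A Buchholz system of fundamental sequences for `Θ_X`. -/
def IsBuchholz (X : Set Ordinal) (B : Ordinal → ℕ → Ordinal) : Prop :=
  (∀ n, B 0 n = 0) ∧
  (∀ α ξ n, ξ ∈ hatEps X → OmegaO ≤ ξ → tau ξ < OmegaO → ξ = fs α (tau ξ) →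
    B ξ n = fs α (B (tau ξ) n)) ∧
  (∀ ξ n, ξ ∈ hatEps X → 0 < tau (checkF X ξ) → tau (checkF X ξ) < OmegaO →
    B (ThetaF X ξ) n = ThetaF X (B (checkF X ξ) n + ThetaStarF X ξ)) ∧
  (∀ ξ n, ξ ∈ hatEps X → tau (checkF X ξ) = OmegaO →
    B (ThetaF X ξ) n = ThetaIter X ξ n)

/-- The additional clause for the `σ = Θ_{1+Ord}` Buchholz system. -/
def SigmaExtra (B : Ordinal → ℕ → Ordinal) : Prop :=
  ∀ β n, β < OmegaO → B (ThetaF oneOrdS β) n = β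

/-- The additional clauses for the `ϑ = Θ_ℙ` Buchholz system. -/
def VarthetaExtra (B : Ordinal → ℕ → Ordinal) : Prop :=
  (∀ α β n, 0 < β → (∀ α' < α, α' + β < α + β) → B (α + β) n = α + B β n) ∧
  (∀ β n, β < OmegaO → β ∈ JUMPs PP → B (ThetaF PP β) n = ThetaStarF PP β * n)


/-!
`Θ_X(ξ)` is the least element of its set of candidates. For `ξ < Ω` in `JUMP(X)` there is a
bound `b < Θ_X(ξ)` above every `Θ_X(ζ)` with `ζ < ξ` and above `ξ* = ξ`, so every element of `X`
beyond `b` is a candidate: `b = 0` for `ξ = 0`, `b = Θ_X(ζ)` for `ξ = ζ + 1`, and `b = ξ = Θ_X(γ)`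
for `ξ ∈ FIX(X)`, where `γ > ξ` makes `Θ_X(γ)` exceed all `Θ_X(ζ)` with `ζ < ξ`. Hence no point
of `X` lies strictly between `b` and `Θ_X(ξ)`.
-/

def thetaCandidates (X : Set Ordinal) (ξ : Ordinal) : Set Ordinal :=
  {θ | θ ∈ X ∧ star ξ < θ ∧ ∀ ζ, ζ < ξ → star ζ < θ → ThetaF X ζ < θ}

lemma ThetaF_eq_sInf (X : Set Ordinal) (ξ : Ordinal) :
    ThetaF X ξ = sInf (thetaCandidates X ξ) := by
  rw [ThetaF]; rfl

lemma star_eq_of_lt_OmegaO {ξ : Ordinal} (hξ : ξ < OmegaO) : star ξ = ξ := by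
  rcases eq_or_ne ξ 0 with rfl | h0
  · rw [_root_.star]; simp
  have hlog : log OmegaO ξ = 0 := log_eq_zero hξ
  rw [_root_.star, dif_neg h0, dif_pos (hlog ▸ pos_iff_ne_zero.2 h0), hlog]
  simp [_root_.star]

section ThetaF

variable {X : Set Ordinal} {ζ ξ : Ordinal}

lemma thetaCandidates_nonempty_of_pos (h : 0 < ThetaF X ξ) : (thetaCandidates X ξ).Nonempty := by
  by_contra hempty
  rw [not_nonempty_iff_eq_empty] at hempty
  rw [ThetaF_eq_sInf, hempty, Ordinal.sInf_empty] at h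
  exact h.false

lemma ThetaF_mem_thetaCandidates (h : (thetaCandidates X ξ).Nonempty) :
    ThetaF X ξ ∈ thetaCandidates X ξ := by
  rw [ThetaF_eq_sInf]; exact csInf_mem h

lemma thetaCandidates_subset_of_le (hζξ : ζ ≤ ξ) (hξ : ξ < OmegaO) :
    thetaCandidates X ξ ⊆ thetaCandidates X ζ := by
  rintro θ ⟨hθX, hstar, hbelow⟩
  rw [star_eq_of_lt_OmegaO hξ] at hstar
  refine ⟨hθX, ?_, fun ζ' hζ' => hbelow ζ' (hζ'.trans_le hζξ)⟩
  rw [star_eq_of_lt_OmegaO (hζξ.trans_lt hξ)]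
  exact hζξ.trans_lt hstar

lemma lt_ThetaF (hξ : ξ < OmegaO) (h : (thetaCandidates X ξ).Nonempty) : ξ < ThetaF X ξ := by
  simpa only [star_eq_of_lt_OmegaO hξ] using (ThetaF_mem_thetaCandidates h).2.1

lemma ThetaF_lt_ThetaF (hζξ : ζ < ξ) (hξ : ξ < OmegaO) (h : (thetaCandidates X ξ).Nonempty) :
    ThetaF X ζ < ThetaF X ξ :=
  (ThetaF_mem_thetaCandidates h).2.2 ζ hζξ <| by
    rw [star_eq_of_lt_OmegaO (hζξ.trans hξ)]; exact hζξ.trans (lt_ThetaF hξ h)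

lemma ThetaF_notMem_limitPtsOf_of_bound {b : Ordinal} (hb : b < ThetaF X ξ)
    (hstar : star ξ ≤ b) (hbound : ∀ ζ < ξ, ThetaF X ζ ≤ b) :
    ThetaF X ξ ∉ limitPtsOf X := by
  rintro ⟨-, hlim⟩
  obtain ⟨z, hzX, hbz, hzθ⟩ := hlim b hb
  have hz : z ∈ thetaCandidates X ξ :=
    ⟨hzX, hstar.trans_lt hbz, fun ζ hζ _ => (hbound ζ hζ).trans_lt hbz⟩
  exact (csInf_le' hz).not_gt (ThetaF_eq_sInf X ξ ▸ hzθ)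

lemma ThetaF_succ_notMem_limitPtsOf (hζ : ζ + 1 < OmegaO) :
    ThetaF X (ζ + 1) ∉ limitPtsOf X := by
  intro hlim
  have hne := thetaCandidates_nonempty_of_pos hlim.1
  have hζΩ : ζ < OmegaO := (lt_add_one ζ).trans hζ
  have hneζ := hne.mono (thetaCandidates_subset_of_le (lt_add_one ζ).le hζ)
  refine ThetaF_notMem_limitPtsOf_of_bound (ThetaF_lt_ThetaF (lt_add_one ζ) hζ hne) ?_ ?_ hlim
  · rw [star_eq_of_lt_OmegaO hζ]; exact Order.add_one_le_of_lt (lt_ThetaF hζΩ hneζ)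
  · intro ζ' hζ'
    rcases (Order.lt_add_one_iff.mp hζ').eq_or_lt with rfl | hlt
    · exact le_rfl
    · exact (ThetaF_lt_ThetaF hlt hζΩ hneζ).le

lemma ThetaF_notMem_limitPtsOf_of_mem_FIXs (hξ : ξ < OmegaO) (hfix : ξ ∈ FIXs X) :
    ThetaF X ξ ∉ limitPtsOf X := by
  intro hlim
  obtain ⟨-, hfs, -, γ, hξγ, -, hΘγ⟩ := hfix
  rw [star_eq_of_lt_OmegaO hξ] at hfs hΘγ
  have hγ : ThetaF X γ ∈ thetaCandidates X γ :=
    ThetaF_mem_thetaCandidates (thetaCandidates_nonempty_of_pos (hΘγ ▸ pos_of_gt hfs))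
  refine ThetaF_notMem_limitPtsOf_of_bound
    (lt_ThetaF hξ (thetaCandidates_nonempty_of_pos hlim.1)) (star_eq_of_lt_OmegaO hξ).le ?_ hlim
  intro ζ hζ
  rw [hΘγ]
  exact (hγ.2.2 ζ (hζ.trans hξγ) (by rwa [star_eq_of_lt_OmegaO (hζ.trans hξ), ← hΘγ])).le

end ThetaF

theorem stmt7_general (X : Set Ordinal)
    (ξ : Ordinal) (h1 : ξ < OmegaO) (h2 : ξ ∈ JUMPs X) :
    ThetaF X ξ ∉ limitPtsOf X := by
  rcases h2 with (rfl | ⟨ζ, rfl⟩) | hfix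
  · exact fun hlim => ThetaF_notMem_limitPtsOf_of_bound hlim.1 (star_eq_of_lt_OmegaO h1).le
      (fun ζ hζ => absurd hζ not_lt_zero) hlim
  · exact ThetaF_succ_notMem_limitPtsOf h1
  · exact ThetaF_notMem_limitPtsOf_of_mem_FIXs h1 hfix

/-- If `ξ < Ω` and `ξ ∈ JUMP(X)` then `Θ_X(ξ)` is not a limit point of `X`. -/
theorem stmt7 (X : Set Ordinal) (hX : IsClubBelowOmega X) (h0X : 0 ∉ X)
    (ξ : Ordinal) (h1 : ξ < OmegaO) (h2 : ξ ∈ JUMPs X) :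
    ThetaF X ξ ∉ limitPtsOf X :=
  stmt7_general X ξ h1 h2

end
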